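/- Let K ⊆ ℝ^N be a linear subspace of dimension N''. Then there exists a subset k ⊆ {1,…,N} of size N'' such that, with V := span(e_j : j ∈ k), the orthogonal projection q : K → V is a bijection whose inverse Γ : V → K is N-Lipschitz (with respect to the Euclidean norms). -/

import Mathlib

/-!
Write a basis of `K` as the columns of an `N × N''` matrix `U` and choose the rows `r` for which
the minor `M = U.submatrix r id` has maximal `|det|`; it is nonzero because the columns of `U` are
independent. By Cramer's rule every entry of `U * M⁻¹` is a ratio of two such minors, hence has
absolute value at most `1`. The map `Γ v = U M⁻¹ (v ∘ r)` takes values in the column space `K`,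
inverts the coordinate projection onto the rows `r` because `M⁻¹ M = 1`, and is `N`-Lipschitz
because the Frobenius norm of `U * M⁻¹` is at most `√(N N'') ≤ N`.
-/

open scoped NNReal

theorem EuclideanSpace.norm_comp_le_of_injective {ι κ : Type*} [Fintype ι] [Fintype κ]
    {r : κ → ι} (hr : Function.Injective r) (v : EuclideanSpace ℝ ι) :
    ‖WithLp.toLp 2 (fun j => v (r j))‖ ≤ ‖v‖ := by
  rw [EuclideanSpace.norm_eq, EuclideanSpace.norm_eq]
  gcongr
  calc ∑ j, ‖v (r j)‖ ^ 2 = ∑ i ∈ Finset.univ.map ⟨r, hr⟩, ‖v i‖ ^ 2 := by simp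
    _ ≤ ∑ i, ‖v i‖ ^ 2 := Finset.sum_le_univ_sum_of_nonneg fun _ => by positivity

namespace Matrix

section Minors

variable {m n : Type*} [Fintype n] [DecidableEq n]

theorem exists_det_submatrix_ne_zero {𝕜 : Type*} [Field 𝕜] [Fintype m] [DecidableEq m]
    (U : Matrix m n 𝕜) (hU : LinearIndependent 𝕜 U.col) :
    ∃ r : n → m, (U.submatrix r id).det ≠ 0 := by
  have hsurj : Function.Surjective Uᵀ.mulVecLin := by
    rw [← LinearMap.range_eq_top]
    apply Submodule.eq_top_of_finrank_eq
    rw [Module.finrank_fintype_fun_eq_card]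
    exact LinearIndependent.rank_matrix (M := Uᵀ) hU
  choose x hx using fun j => hsurj (Pi.basisFun 𝕜 n j)
  by_contra! hminors
  -- The maximal minors of `U` are the values of `D` on basis vectors, and `D x = 1`.
  let D := detRowAlternating.compLinearMap Uᵀ.mulVecLin
  have hD : D = 0 := (Pi.basisFun 𝕜 m).ext_alternating fun r _ => by
    simp only [D, AlternatingMap.compLinearMap_apply, Pi.basisFun_apply, mulVecLin_apply,
      mulVec_single_one, col_transpose]
    exact hminors r
  have h := congrArg (fun f => f x) hD
  simp only [D, AlternatingMap.compLinearMap_apply, hx, ← Pi.basisFun_det,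
    Module.Basis.det_self, AlternatingMap.zero_apply] at h
  exact one_ne_zero h

theorem mul_inv_submatrix_apply {𝕜 : Type*} [Field 𝕜] (U : Matrix m n 𝕜) (r : n → m)
    (i : m) (j : n) :
    (U * (U.submatrix r id)⁻¹) i j =
      (U.submatrix (Function.update r j i) id).det / (U.submatrix r id).det := by
  set M := U.submatrix r id
  have hrow : M.updateRow j (U i) = U.submatrix (Function.update r j i) id := by
    ext a l
    rcases eq_or_ne a j with rfl | ha <;> simp [M, updateRow_apply, *]
  calc (U * M⁻¹) i j = (U i ᵥ* M.adjugate) j / M.det := by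
        rw [inv_def, Ring.inverse_eq_inv', Matrix.mul_smul, smul_apply, smul_eq_mul,
          inv_mul_eq_div]
        rfl
    _ = _ := by
        rw [← mulVec_transpose, adjugate_transpose, ← cramer_eq_adjugate_mulVec,
          cramer_transpose_apply, hrow]

theorem injective_of_det_submatrix_ne_zero {R : Type*} [CommRing R] {U : Matrix m n R}
    {r : n → m} (h : (U.submatrix r id).det ≠ 0) : Function.Injective r :=
  fun _ _ hab => by_contra fun hne => h (det_zero_of_row_eq hne (congrArg U hab))

theorem exists_isUnit_det_submatrix_and_abs_le_one [Fintype m] [DecidableEq m]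
    (U : Matrix m n ℝ) (hU : LinearIndependent ℝ U.col) :
    ∃ r : n → m, IsUnit (U.submatrix r id).det ∧
      ∀ i j, |(U * (U.submatrix r id)⁻¹) i j| ≤ 1 := by
  obtain ⟨r₀, hr₀⟩ := U.exists_det_submatrix_ne_zero hU
  have : Nonempty (n → m) := ⟨r₀⟩
  obtain ⟨r, hmax⟩ := Finite.exists_max fun s : n → m => |(U.submatrix s id).det|
  refine ⟨r, ?_, fun i j => ?_⟩
  · exact isUnit_iff_ne_zero.mpr (abs_pos.mp ((abs_pos.mpr hr₀).trans_le (hmax r₀)))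
  · rw [mul_inv_submatrix_apply, abs_div]
    exact div_le_one_of_le₀ (hmax _) (abs_nonneg _)

end Minors

section Frobenius

open scoped Matrix.Norms.Frobenius

variable {m n : Type*} [Fintype m] [Fintype n]

theorem frobenius_norm_le_sqrt_card_mul {A : Matrix m n ℝ} (hA : ∀ i j, |A i j| ≤ 1) :
    ‖A‖ ≤ √(Fintype.card m * Fintype.card n) := by
  rw [frobenius_norm_def, Real.sqrt_eq_rpow]
  gcongr
  calc ∑ i, ∑ j, ‖A i j‖ ^ (2 : ℝ) ≤ ∑ _i : m, ∑ _j : n, (1 : ℝ) := by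
        gcongr with i _ j
        rw [Real.rpow_two, Real.norm_eq_abs]
        exact pow_le_one₀ (abs_nonneg _) (hA i j)
    _ = _ := by simp

theorem norm_toLp_mulVec_le {A : Matrix m n ℝ} (hA : ∀ i j, |A i j| ≤ 1) (w : n → ℝ) :
    ‖WithLp.toLp 2 (A *ᵥ w)‖ ≤ √(Fintype.card m * Fintype.card n) * ‖WithLp.toLp 2 w‖ := by
  rw [← frobenius_norm_replicateCol (ι := Unit), ← frobenius_norm_replicateCol (ι := Unit),
    replicateCol_mulVec]
  exact (frobenius_norm_mul _ _).trans (by gcongr; exact frobenius_norm_le_sqrt_card_mul hA)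

end Frobenius

theorem lipschitzWith_toLp_mulVec_comp {ι κ : Type*} [Fintype ι] [Fintype κ]
    {A : Matrix ι κ ℝ} (hA : ∀ i j, |A i j| ≤ 1) {r : κ → ι} (hr : Function.Injective r) :
    LipschitzWith (Fintype.card ι) fun v : EuclideanSpace ℝ ι =>
      (WithLp.toLp 2 (A *ᵥ fun j => v (r j)) : EuclideanSpace ℝ ι) := by
  let L : EuclideanSpace ℝ ι →ₗ[ℝ] EuclideanSpace ℝ ι :=
    (WithLp.linearEquiv 2 ℝ _).symm.toLinearMap ∘ₗ A.mulVecLin ∘ₗ LinearMap.funLeft ℝ ℝ r ∘ₗ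
      (WithLp.linearEquiv 2 ℝ _).toLinearMap
  have hcard : √(Fintype.card ι * Fintype.card κ : ℝ) ≤ Fintype.card ι := by
    calc √(Fintype.card ι * Fintype.card κ : ℝ) ≤ √(Fintype.card ι * Fintype.card ι : ℝ) := by
          gcongr; exact Fintype.card_le_of_injective r hr
      _ = Fintype.card ι := Real.sqrt_mul_self (Nat.cast_nonneg _)
  rw [← Real.toNNReal_natCast]
  exact AddMonoidHomClass.lipschitz_of_bound L (Fintype.card ι) fun v => calc
    ‖L v‖ ≤ √(Fintype.card ι * Fintype.card κ : ℝ) * ‖WithLp.toLp 2 fun j => v (r j)‖ :=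
      A.norm_toLp_mulVec_le hA _
    _ ≤ Fintype.card ι * ‖v‖ := by
      gcongr; exact EuclideanSpace.norm_comp_le_of_injective hr v

end Matrix

namespace Module.Basis

open Matrix

variable {𝕜 ι n : Type*} [RCLike 𝕜] {K : Submodule 𝕜 (EuclideanSpace 𝕜 ι)} (b : Basis n 𝕜 K)

theorem linearIndependent_col_of_coe :
    LinearIndependent 𝕜 (Matrix.of fun i j => (b j : EuclideanSpace 𝕜 ι) i).col :=
  (b.linearIndependent.map' K.subtype K.ker_subtype).map'
    (WithLp.linearEquiv 2 𝕜 (ι → 𝕜)).toLinearMap (LinearEquiv.ker _)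

theorem toLp_mulVec_of_coe [Fintype n] (c : n → 𝕜) :
    WithLp.toLp 2 ((Matrix.of fun i j => (b j : EuclideanSpace 𝕜 ι) i) *ᵥ c) =
      (b.equivFun.symm c : EuclideanSpace 𝕜 ι) := by
  ext i
  simp [Basis.equivFun_symm_apply, Matrix.mulVec, dotProduct, mul_comm]

end Module.Basis

open Matrix in
/-- for every linear subspace `K ⊆ ℝ^N` of dimension `N''` there is a set
`k` of `N''` coordinates such that the coordinate (orthogonal) projection `q` onto
`V = span(e_j : j ∈ k)` restricted to `K` has an `N`-Lipschitz inverse `Γ : V → K`. -/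
theorem exists_lipschitz_coordinate_parametrization (N N'' : ℕ)
    (K : Submodule ℝ (EuclideanSpace ℝ (Fin N)))
    (hK : Module.finrank ℝ K = N'') :
    ∃ k : Finset (Fin N), k.card = N'' ∧
      ∃ Γ : EuclideanSpace ℝ (Fin N) → EuclideanSpace ℝ (Fin N),
        (∀ v, Γ v ∈ K) ∧
        LipschitzWith (N : ℝ≥0) Γ ∧
        (∀ x ∈ K, Γ (WithLp.toLp 2 (fun i => if i ∈ k then x i else 0 : Fin N → ℝ) :
            EuclideanSpace ℝ (Fin N)) = x) ∧
        (∀ v : EuclideanSpace ℝ (Fin N), (∀ i, i ∉ k → v i = 0) →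
            ∀ i ∈ k, Γ v i = v i) := by
  classical
  let b := Module.finBasisOfFinrankEq ℝ K hK
  let U : Matrix (Fin N) (Fin N'') ℝ := of fun i j => (b j : EuclideanSpace ℝ (Fin N)) i
  obtain ⟨r, hdet, hbound⟩ :=
    U.exists_isUnit_det_submatrix_and_abs_le_one b.linearIndependent_col_of_coe
  have hr := injective_of_det_submatrix_ne_zero hdet.ne_zero
  let A := U * (U.submatrix r id)⁻¹
  have hAr : A.submatrix r id = 1 := mul_nonsing_inv _ hdet
  have hAU : A * U.submatrix r id = U := nonsing_inv_mul_cancel_right _ _ hdet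
  refine ⟨Finset.univ.image r, by simp [Finset.card_image_of_injective _ hr],
    fun v => WithLp.toLp 2 (A *ᵥ fun j => v (r j)), fun v => ?_,
    by simpa using lipschitzWith_toLp_mulVec_comp hbound hr, fun x hx => ?_, fun v _ i hi => ?_⟩
  · dsimp only
    rw [← mulVec_mulVec, b.toLp_mulVec_of_coe]
    exact Submodule.coe_mem _
  · obtain ⟨c, rfl⟩ : ∃ c, WithLp.toLp 2 (U *ᵥ c) = x :=
      ⟨b.equivFun ⟨x, hx⟩, by rw [b.toLp_mulVec_of_coe, LinearEquiv.symm_apply_apply]⟩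
    dsimp only
    congr 1
    calc A *ᵥ _ = A *ᵥ (U.submatrix r id *ᵥ c) := by
          congr 1
          ext j
          simp only [Finset.mem_image, Finset.mem_univ, true_and, exists_apply_eq_apply,
            ↓reduceIte]
          rfl
      _ = U *ᵥ c := by rw [mulVec_mulVec, hAU]
  · obtain ⟨j, -, rfl⟩ := Finset.mem_image.mp hi
    change (A.submatrix r id *ᵥ fun j => v (r j)) j = v (r j)
    rw [hAr, one_mulVec]
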